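/- For any tripartite density operator ρ_{ABC} on ℂ^d ⊗ ℂ^d ⊗ ℂ^{d₂}, the trace distance between the marginals satisfies D(ρ_{AC}, ρ_{BC}) ≤ 2√(Tr(P_as ρ_{AB}) · Tr(P_s ρ_{AB})). -/

import Mathlib

open scoped Matrix Kronecker ComplexOrder

noncomputable section

namespace QEMD

variable {m n : Type*} [Fintype m] [Fintype n] [DecidableEq m] [DecidableEq n]

/-- Total square root: the PSD square root if `A` is PSD, else `0`. -/
def msqrt (A : Matrix n n ℂ) : Matrix n n ℂ :=
  letI := Classical.dec A.PosSemidef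
  if h : A.PosSemidef then
    (h.1.eigenvectorUnitary : Matrix n n ℂ) * Matrix.diagonal ((↑) ∘ (Real.sqrt ·) ∘ h.1.eigenvalues)
      * (star h.1.eigenvectorUnitary : Matrix n n ℂ) else 0

/-- Trace norm `‖A‖₁ = Tr √(AᴴA)`. -/
def traceNorm (A : Matrix n n ℂ) : ℝ :=
  ((msqrt (Aᴴ * A)).trace).re

/-- Trace distance `D(ρ,σ) = ½‖ρ-σ‖₁`. -/
def traceDist (ρ σ : Matrix n n ℂ) : ℝ := traceNorm (ρ - σ) / 2

/-- Fidelity `F(ρ,σ) = Tr √(√ρ σ √ρ)`. -/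
def fidelity (ρ σ : Matrix n n ℂ) : ℝ :=
  ((msqrt (msqrt ρ * σ * msqrt ρ)).trace).re

/-- Density matrix predicate. -/
def IsDensity (ρ : Matrix n n ℂ) : Prop := ρ.PosSemidef ∧ ρ.trace = 1

/-- Projector `|v⟩⟨v|` onto a vector. -/
def proj (v : n → ℂ) : Matrix n n ℂ := Matrix.of fun i j => v i * star (v j)

/-- Partial trace over the first (left) factor. -/
def traceLeft (ρ : Matrix (m × n) (m × n) ℂ) : Matrix n n ℂ :=
  Matrix.of fun i j => ∑ k, ρ (k, i) (k, j)

/-- Partial trace over the second (right) factor. -/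
def traceRight (ρ : Matrix (m × n) (m × n) ℂ) : Matrix m m ℂ :=
  Matrix.of fun i j => ∑ k, ρ (i, k) (j, k)

/-- The swap operator `S|αβ⟩ = |βα⟩` on `ℂ^d ⊗ ℂ^d`. -/
def swap (d : ℕ) : Matrix (Fin d × Fin d) (Fin d × Fin d) ℂ :=
  Matrix.of fun p q => if p.1 = q.2 ∧ p.2 = q.1 then 1 else 0

/-- Projection onto the symmetric subspace, `P_s = (I + S)/2`. -/
def Psym (d : ℕ) : Matrix (Fin d × Fin d) (Fin d × Fin d) ℂ := (2:ℂ)⁻¹ • (1 + swap d)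

/-- Projection onto the antisymmetric subspace, `P_as = (I - S)/2`. -/
def Pasym (d : ℕ) : Matrix (Fin d × Fin d) (Fin d × Fin d) ℂ := (2:ℂ)⁻¹ • (1 - swap d)

/-- `ρAB` is a quantum coupling of `ρA` and `ρB`. -/
def IsCoupling (ρAB : Matrix (m × n) (m × n) ℂ) (ρA : Matrix m m ℂ)
    (ρB : Matrix n n ℂ) : Prop :=
  IsDensity ρAB ∧ traceRight ρAB = ρA ∧ traceLeft ρAB = ρB

/-- The maximally entangled vector `|Φ⟩ = (1/√d) ∑ᵢ |i⟩|i⟩`. -/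
def maxEnt (d : ℕ) : Fin d × Fin d → ℂ :=
  fun p => if p.1 = p.2 then ((1 / Real.sqrt d : ℝ) : ℂ) else 0

/-!
Let `S = P_s - P_as` be the swap of `A` and `B` (tensored with the identity on `C`). Then
`ρ_AC = Tr_B ρ` and `ρ_BC = Tr_B (S ρ S)`, and since `P_s + P_as = 1`,
`ρ - S ρ S = 2 (P_s ρ P_as + P_as ρ P_s)`.
The trace norm of a Hermitian matrix `X` is `Re Tr (W X)` for its sign `W`, a contraction, and
`Tr (W · Tr_B Y) = Tr ((W ⊗ 1) Y)` with `W ⊗ 1` again a contraction. Finally, with `R = √ρ`,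
the Cauchy–Schwarz inequality for `(X, Y) ↦ Tr (Y Xᴴ)` applied to `Q R` and `V P R` gives
`Re Tr (V P ρ Q) ≤ √(Tr (Q ρ)) √(Tr (P ρ))` for every contraction `V` and projections `P`, `Q`.
The two cross terms thus give `‖ρ_AC - ρ_BC‖₁ ≤ 4 √(Tr (P_as ρ_AB)) √(Tr (P_s ρ_AB))`.
-/

open Matrix
open scoped MatrixOrder

section TraceNorm

variable {ι : Type*} [Fintype ι] [DecidableEq ι]

lemma msqrt_eq_cfcSqrt {A : Matrix ι ι ℂ} (hA : A.PosSemidef) : msqrt A = CFC.sqrt A := by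
  rw [msqrt, dif_pos hA, CFC.sqrt_eq_real_sqrt A hA.nonneg, cfcₙ_eq_cfc (hf0 := Real.sqrt_zero),
    hA.1.cfc_eq]
  rfl

lemma traceNorm_eq_re_trace_abs (A : Matrix ι ι ℂ) : traceNorm A = (CFC.abs A).trace.re := by
  rw [traceNorm, msqrt_eq_cfcSqrt (posSemidef_conjTranspose_mul_self A)]
  rfl

lemma _root_.Matrix.IsHermitian.exists_trace_mul_eq_traceNorm {A : Matrix ι ι ℂ}
    (hA : A.IsHermitian) : ∃ W : Matrix ι ι ℂ, Wᴴ * W ≤ 1 ∧ (W * A).trace.re = traceNorm A := by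
  have hsign : ContinuousOn Real.sign (spectrum ℝ A) := A.finite_real_spectrum.continuousOn _
  refine ⟨cfc Real.sign A, ?_, ?_⟩
  · have hW : (cfc Real.sign A)ᴴ = cfc Real.sign A := cfc_predicate Real.sign A
    rw [hW, ← cfc_mul _ _ A]
    refine cfc_le_one _ _ fun x _ => ?_
    rcases Real.sign_apply_eq x with h | h | h <;> simp [h]
  · suffices cfc Real.sign A * A = CFC.abs A by rw [this, traceNorm_eq_re_trace_abs]
    rw [CFC.abs_eq_cfc_norm A hA]
    nth_rewrite 2 [← cfc_id' ℝ A]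
    rw [← cfc_mul Real.sign (fun x => x) A]
    refine cfc_congr fun x _ => ?_
    rcases lt_trichotomy x 0 with h | rfl | h
    · simp [Real.sign_of_neg h, abs_of_neg h]
    · simp
    · simp [Real.sign_of_pos h, abs_of_pos h]

end TraceNorm

section TraceInequalities

variable {ι : Type*} [Fintype ι]

lemma re_trace_le_re_trace_of_le [DecidableEq ι] {A B : Matrix ι ι ℂ} (h : A ≤ B) :
    A.trace.re ≤ B.trace.re := by
  have := (le_iff.mp h).trace_nonneg
  rw [trace_sub, sub_nonneg] at this
  exact (Complex.le_def.mp this).1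

lemma re_trace_mul_conjTranspose_le [DecidableEq ι] (X Y : Matrix ι ι ℂ) :
    (Y * Xᴴ).trace.re ≤ √(X * Xᴴ).trace.re * √(Y * Yᴴ).trace.re := by
  let _ := toMatrixSeminormedAddCommGroup (1 : Matrix ι ι ℂ) PosSemidef.one
  let _ := toMatrixInnerProductSpace (1 : Matrix ι ι ℂ) PosSemidef.one
  have h := re_inner_le_norm (𝕜 := ℂ) X Y
  rw [norm_eq_sqrt_re_inner (𝕜 := ℂ), norm_eq_sqrt_re_inner (𝕜 := ℂ)] at h
  change (Y * 1 * Xᴴ).trace.re ≤ √((X * 1 * Xᴴ).trace.re) * √((Y * 1 * Yᴴ).trace.re) at h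
  simpa only [Matrix.mul_one] using h

lemma _root_.IsStarProjection.trace_mul_mul_self {P : Matrix ι ι ℂ} (hP : IsStarProjection P)
    (ρ : Matrix ι ι ℂ) : (P * ρ * P).trace = (P * ρ).trace := by
  rw [trace_mul_comm, ← Matrix.mul_assoc, hP.isIdempotentElem.eq]

lemma _root_.IsStarProjection.re_trace_mul_nonneg {P ρ : Matrix ι ι ℂ} (hP : IsStarProjection P)
    (hρ : ρ.PosSemidef) : 0 ≤ (P * ρ).trace.re := by
  have h := (hρ.mul_mul_conjTranspose_same P).trace_nonneg
  rw [show Pᴴ = P from hP.isSelfAdjoint, hP.trace_mul_mul_self] at h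
  exact (Complex.le_def.mp h).1

lemma re_trace_mul_mul_mul_le [DecidableEq ι] {ρ P Q V : Matrix ι ι ℂ} (hρ : ρ.PosSemidef)
    (hP : IsStarProjection P) (hQ : IsStarProjection Q) (hV : Vᴴ * V ≤ 1) :
    (V * (P * ρ * Q)).trace.re ≤ √(Q * ρ).trace.re * √(P * ρ).trace.re := by
  set R := CFC.sqrt ρ
  have hR : Rᴴ = R := (CFC.sqrt_nonneg ρ).isSelfAdjoint
  have hRR : R * R = ρ := CFC.sqrt_mul_sqrt_self ρ hρ.nonneg
  have hPH : Pᴴ = P := hP.isSelfAdjoint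
  have hQH : Qᴴ = Q := hQ.isSelfAdjoint
  have hcross : (V * P * R * (Q * R)ᴴ).trace = (V * (P * ρ * Q)).trace := by
    simp only [conjTranspose_mul, hR, hQH, ← hRR, Matrix.mul_assoc]
  have hQρ : (Q * R * (Q * R)ᴴ).trace = (Q * ρ).trace := by
    rw [← hQ.trace_mul_mul_self, ← hRR]
    simp only [conjTranspose_mul, hR, hQH, Matrix.mul_assoc]
  have hPρ : (V * P * R * (V * P * R)ᴴ).trace.re ≤ (P * ρ).trace.re := by
    rw [trace_mul_comm]
    calc ((V * P * R)ᴴ * (V * P * R)).trace.re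
        = (star (P * R) * (Vᴴ * V) * (P * R)).trace.re := by
          simp only [star_eq_conjTranspose, conjTranspose_mul, Matrix.mul_assoc]
      _ ≤ (star (P * R) * 1 * (P * R)).trace.re :=
          re_trace_le_re_trace_of_le (star_left_conjugate_le_conjugate hV _)
      _ = (P * ρ).trace.re := by
          rw [Matrix.mul_one, star_eq_conjTranspose, conjTranspose_mul, hR, hPH, trace_mul_comm,
            ← hP.trace_mul_mul_self, ← hRR]
          simp only [Matrix.mul_assoc]
  calc (V * (P * ρ * Q)).trace.re = (V * P * R * (Q * R)ᴴ).trace.re := by rw [hcross]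
    _ ≤ √(Q * R * (Q * R)ᴴ).trace.re * √(V * P * R * (V * P * R)ᴴ).trace.re :=
        re_trace_mul_conjTranspose_le _ _
    _ ≤ √(Q * ρ).trace.re * √(P * ρ).trace.re := by
        rw [hQρ]
        gcongr

lemma re_trace_mul_sub_conj_le [DecidableEq ι] {ρ P Q V : Matrix ι ι ℂ} (hρ : ρ.PosSemidef)
    (hP : IsStarProjection P) (hPQ : P + Q = 1) (hV : Vᴴ * V ≤ 1) :
    (V * (ρ - (P - Q) * ρ * (P - Q))).trace.re
      ≤ 4 * (√(Q * ρ).trace.re * √(P * ρ).trace.re) := by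
  obtain rfl : Q = 1 - P := eq_sub_of_add_eq' hPQ
  have hsplit : ρ - (P - (1 - P)) * ρ * (P - (1 - P))
      = P * ρ * (1 - P) + (1 - P) * ρ * P + (P * ρ * (1 - P) + (1 - P) * ρ * P) := by
    noncomm_ring
  have hPQ := re_trace_mul_mul_mul_le hρ hP hP.one_sub hV
  have hQP := re_trace_mul_mul_mul_le hρ hP.one_sub hP hV
  simp only [hsplit, Matrix.mul_add, trace_add, Complex.add_re]
  linarith

end TraceInequalities

section PartialTrace

lemma sub_kronecker {R l m n p : Type*} [Ring R] (A₁ A₂ : Matrix l m R) (B : Matrix n p R) :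
    (A₁ - A₂) ⊗ₖ B = A₁ ⊗ₖ B - A₂ ⊗ₖ B := by
  ext
  simp [sub_mul]

lemma _root_.IsStarProjection.kronecker {R ι κ : Type*} [CommSemiring R] [StarRing R]
    [Fintype ι] [Fintype κ] {P : Matrix ι ι R} {Q : Matrix κ κ R}
    (hP : IsStarProjection P) (hQ : IsStarProjection Q) : IsStarProjection (P ⊗ₖ Q) where
  isIdempotentElem := by
    rw [IsIdempotentElem, ← mul_kronecker_mul, hP.isIdempotentElem.eq, hQ.isIdempotentElem.eq]
  isSelfAdjoint := by
    rw [IsSelfAdjoint, star_eq_conjTranspose, conjTranspose_kronecker,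
      show Pᴴ = P from hP.isSelfAdjoint, show Qᴴ = Q from hQ.isSelfAdjoint]

variable {ι κ : Type*} [Fintype κ]

lemma _root_.Matrix.IsHermitian.traceRight {M : Matrix (ι × κ) (ι × κ) ℂ} (hM : M.IsHermitian) :
    (traceRight M).IsHermitian := by
  ext i j
  simp only [QEMD.traceRight, conjTranspose_apply, of_apply, star_sum, hM.apply]

variable [Fintype ι]

lemma trace_submatrix_equiv {R : Type*} [AddCommMonoid R] (A : Matrix ι ι R) (e : κ ≃ ι) :
    (A.submatrix e e).trace = A.trace :=
  e.sum_comp fun i => A i i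

lemma trace_submatrix_mul {R : Type*} [Semiring R] (A : Matrix ι ι R) (M : Matrix κ κ R)
    (e : κ ≃ ι) : (A.submatrix e e * M).trace = (A * M.submatrix e.symm e.symm).trace := by
  rw [← trace_submatrix_equiv _ e, ← submatrix_mul_equiv A _ e e e, submatrix_submatrix,
    Equiv.symm_comp_self, submatrix_id_id]

lemma trace_kronecker_one_mul [DecidableEq κ] (C : Matrix ι ι ℂ) (M : Matrix (ι × κ) (ι × κ) ℂ) :
    ((C ⊗ₖ (1 : Matrix κ κ ℂ)) * M).trace = (C * traceRight M).trace := by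
  simp only [trace, diag, mul_apply, kroneckerMap_apply, one_apply, traceRight, of_apply,
    Fintype.sum_prod_type, Finset.mul_sum, mul_ite, mul_one, mul_zero, ite_mul, zero_mul,
    Finset.sum_ite_eq, Finset.mem_univ, if_true]
  exact Finset.sum_congr rfl fun _ _ => Finset.sum_comm

end PartialTrace

section TraceMiddle

variable {α β γ : Type*} [Fintype β]

def traceMiddle (M : Matrix ((α × β) × γ) ((α × β) × γ) ℂ) : Matrix (α × γ) (α × γ) ℂ :=
  of fun p q => ∑ b, M ((p.1, b), p.2) ((q.1, b), q.2)

def middleToRight : (α × β) × γ ≃ (α × γ) × β where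
  toFun x := ((x.1.1, x.2), x.1.2)
  invFun x := ((x.1.1, x.2), x.1.2)

lemma traceMiddle_eq_traceRight (M : Matrix ((α × β) × γ) ((α × β) × γ) ℂ) :
    traceMiddle M = traceRight (M.submatrix middleToRight.symm middleToRight.symm) :=
  rfl

lemma traceMiddle_sub (M N : Matrix ((α × β) × γ) ((α × β) × γ) ℂ) :
    traceMiddle (M - N) = traceMiddle M - traceMiddle N := by
  ext
  simp [traceMiddle, Finset.sum_sub_distrib]

variable [Fintype α] [Fintype γ] [DecidableEq β]

lemma trace_kronecker_one_submatrix_mul (C : Matrix (α × γ) (α × γ) ℂ)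
    (M : Matrix ((α × β) × γ) ((α × β) × γ) ℂ) :
    ((C ⊗ₖ (1 : Matrix β β ℂ)).submatrix middleToRight middleToRight * M).trace
      = (C * traceMiddle M).trace := by
  rw [trace_submatrix_mul, trace_kronecker_one_mul, traceMiddle_eq_traceRight]

variable [DecidableEq α] [DecidableEq γ]

lemma _root_.Matrix.IsHermitian.exists_trace_mul_eq_traceNorm_traceMiddle
    {M : Matrix ((α × β) × γ) ((α × β) × γ) ℂ} (hM : M.IsHermitian) :
    ∃ V, Vᴴ * V ≤ 1 ∧ (V * M).trace.re = traceNorm (traceMiddle M) := by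
  obtain ⟨W, hW, hWM⟩ :=
    ((hM.submatrix middleToRight.symm).traceRight).exists_trace_mul_eq_traceNorm
  refine ⟨(W ⊗ₖ (1 : Matrix β β ℂ)).submatrix middleToRight middleToRight, ?_, ?_⟩
  · have h := ((le_iff.mp hW).kronecker (PosSemidef.one (n := β))).submatrix middleToRight
    rw [sub_kronecker, one_kronecker_one] at h
    rw [le_iff, conjTranspose_submatrix, submatrix_mul_equiv, conjTranspose_kronecker,
      conjTranspose_one, ← mul_kronecker_mul, Matrix.one_mul, ← submatrix_one_equiv middleToRight]
    exact h
  · rw [trace_kronecker_one_submatrix_mul]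
    exact hWM

lemma traceNorm_traceMiddle_sub_conj_le {ρ P Q : Matrix ((α × β) × γ) ((α × β) × γ) ℂ}
    (hρ : ρ.PosSemidef) (hP : IsStarProjection P) (hPQ : P + Q = 1) :
    traceNorm (traceMiddle (ρ - (P - Q) * ρ * (P - Q)))
      ≤ 4 * (√(Q * ρ).trace.re * √(P * ρ).trace.re) := by
  have hS : (P - Q)ᴴ = P - Q := by
    rw [eq_sub_of_add_eq' hPQ, conjTranspose_sub, conjTranspose_sub, conjTranspose_one,
      show Pᴴ = P from hP.isSelfAdjoint]
  have hconj := hρ.mul_mul_conjTranspose_same (P - Q)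
  rw [hS] at hconj
  obtain ⟨V, hV, hVtr⟩ := (hρ.1.sub hconj.1).exists_trace_mul_eq_traceNorm_traceMiddle
  exact hVtr ▸ re_trace_mul_sub_conj_le hρ hP hPQ hV

end TraceMiddle

section Swap

variable (d : ℕ)

lemma conjTranspose_swap : (swap d)ᴴ = swap d := by
  ext p q
  simp only [swap, conjTranspose_apply, of_apply, apply_ite star, star_one, star_zero]
  exact if_congr ⟨fun h => ⟨h.2.symm, h.1.symm⟩, fun h => ⟨h.2.symm, h.1.symm⟩⟩ rfl rfl

lemma swap_mul_swap : swap d * swap d = 1 := by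
  ext ⟨a, b⟩ ⟨c, e⟩
  simp only [swap, mul_apply, of_apply, Fintype.sum_prod_type, ite_and, one_apply, Prod.mk.injEq]
  by_cases h1 : a = c <;> by_cases h2 : b = e <;> simp [h1, h2, eq_comm]

lemma Psym_add_Pasym : Psym d + Pasym d = 1 := by
  unfold Psym Pasym
  module

lemma Psym_sub_Pasym : Psym d - Pasym d = swap d := by
  unfold Psym Pasym
  module

lemma isStarProjection_Psym : IsStarProjection (Psym d) where
  isIdempotentElem := by
    rw [IsIdempotentElem, Psym, smul_mul_smul_comm]
    simp only [mul_add, add_mul, mul_one, one_mul, swap_mul_swap]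
    module
  isSelfAdjoint := by
    rw [IsSelfAdjoint, Psym, star_smul, star_add, star_one, star_eq_conjTranspose (swap d),
      conjTranspose_swap]
    norm_num

lemma traceMiddle_swap_conj {γ : Type*} [Fintype γ] [DecidableEq γ]
    (M : Matrix ((Fin d × Fin d) × γ) ((Fin d × Fin d) × γ) ℂ) :
    traceMiddle ((swap d ⊗ₖ (1 : Matrix γ γ ℂ)) * M * (swap d ⊗ₖ (1 : Matrix γ γ ℂ)))
      = of fun p q => ∑ a, M ((a, p.1), p.2) ((a, q.1), q.2) := by
  ext ⟨x, c⟩ ⟨y, c'⟩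
  simp only [traceMiddle, swap, kroneckerMap_apply, one_apply, of_apply, mul_apply,
    Fintype.sum_prod_type, ite_and, ite_mul, mul_ite, zero_mul, mul_zero, one_mul, mul_one,
    Finset.sum_ite_irrel, Finset.sum_const_zero, Finset.sum_ite_eq, Finset.sum_ite_eq',
    Finset.mem_univ, if_true]

end Swap

theorem stmt18 (d d2 : ℕ)
    (ρ : Matrix ((Fin d × Fin d) × Fin d2) ((Fin d × Fin d) × Fin d2) ℂ)
    (hρ : IsDensity ρ)
    (ρAB : Matrix (Fin d × Fin d) (Fin d × Fin d) ℂ) (hAB : ρAB = traceRight ρ)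
    (ρAC ρBC : Matrix (Fin d × Fin d2) (Fin d × Fin d2) ℂ)
    (hAC : ρAC = Matrix.of fun p q => ∑ b, ρ ((p.1, b), p.2) ((q.1, b), q.2))
    (hBC : ρBC = Matrix.of fun p q => ∑ a, ρ ((a, p.1), p.2) ((a, q.1), q.2)) :
    traceDist ρAC ρBC
      ≤ 2 * Real.sqrt (((Pasym d * ρAB).trace).re * ((Psym d * ρAB).trace).re) := by
  set P := Psym d ⊗ₖ (1 : Matrix (Fin d2) (Fin d2) ℂ)
  set Q := Pasym d ⊗ₖ (1 : Matrix (Fin d2) (Fin d2) ℂ)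
  have hP : IsStarProjection P := (isStarProjection_Psym d).kronecker (.one _)
  have hPQ : P + Q = 1 := by rw [← add_kronecker, Psym_add_Pasym, one_kronecker_one]
  have hQ : IsStarProjection Q := eq_sub_of_add_eq' hPQ ▸ hP.one_sub
  have hBC' : ρBC = traceMiddle ((P - Q) * ρ * (P - Q)) := by
    rw [← sub_kronecker, Psym_sub_Pasym, traceMiddle_swap_conj, hBC]
  have hsym : (Psym d * ρAB).trace = (P * ρ).trace := by rw [hAB, trace_kronecker_one_mul]
  have hasym : (Pasym d * ρAB).trace = (Q * ρ).trace := by rw [hAB, trace_kronecker_one_mul]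
  calc traceDist ρAC ρBC = traceNorm (traceMiddle (ρ - (P - Q) * ρ * (P - Q))) / 2 := by
        rw [traceDist, hBC', hAC, traceMiddle_sub]
        rfl
    _ ≤ 4 * (√(Q * ρ).trace.re * √(P * ρ).trace.re) / 2 := by
        gcongr
        exact traceNorm_traceMiddle_sub_conj_le hρ.1 hP hPQ
    _ = 2 * √((Pasym d * ρAB).trace.re * (Psym d * ρAB).trace.re) := by
        rw [hsym, hasym, Real.sqrt_mul (hQ.re_trace_mul_nonneg hρ.1)]
        ring
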